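/- arXiv:2509.03265 — 4 statements merged into one kernel-verified Lean document; each statement's English description precedes it below -/
import Mathlib

section
/- Let S' be a string, α a character, and y ≥ 1 such that S' does not end with α. A string P with at least two runs has an occurrence ending strictly inside the final run of S'·α^y (i.e., an occurrence whose last position lies among the last y positions) if and only if P truncate matches S'·α^y. -/
variable {α : Type*}

/-- The run-length encoding of a string: each maximal run `a^n` becomes the pair `(a, n)`. -/
def rle [DecidableEq α] : List α → List (α × ℕ)
  | [] => []
  | a :: l =>
    match rle l with
    | [] => [(a, 1)]
    | (b, n) :: t => if a = b then (b, n + 1) :: t else (a, 1) :: (b, n) :: t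

lemma rle_replicate [DecidableEq α] (c : α) : ∀ n, rle (List.replicate n c) = if n = 0 then [] else [(c, n)]
  | 0 => rfl
  | n+1 => by
    rw [List.replicate_succ]
    unfold rle
    rw [rle_replicate c n]
    cases n <;> simp

lemma not_replicate_of_rle [DecidableEq α] {P : List α} (hP : 2 ≤ (rle P).length)
    (c : α) (n : ℕ) : P ≠ List.replicate n c := by
  intro h
  rw [h, rle_replicate] at hP
  split at hP <;> simp at hP

lemma getLast?_replicate_pos {c : α} {n : ℕ} (hn : 1 ≤ n) :
    (List.replicate n c).getLast? = some c := by
  rw [List.getLast?_replicate, if_neg (by omega : ¬ n = 0)]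

lemma trunc_unique {Qp S' : List α} {b a : α} {v y : ℕ}
    (h : Qp ++ List.replicate v b = S' ++ List.replicate y a)
    (hv : 1 ≤ v) (hy : 1 ≤ y) (hQp : Qp.getLast? ≠ some b) (hS' : S'.getLast? ≠ some a) :
    b = a ∧ Qp = S' ∧ v = y := by
  have hba : b = a := by
    have h1 : (Qp ++ List.replicate v b).getLast? = some b := by
      rw [List.getLast?_append, getLast?_replicate_pos hv]; rfl
    have h2 : (S' ++ List.replicate y a).getLast? = some a := by
      rw [List.getLast?_append, getLast?_replicate_pos hy]; rfl
    rw [h, h2] at h1; exact (Option.some_inj.mp h1).symm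
  subst hba
  have hvy : v = y := by
    rcases Nat.lt_trichotomy v y with hlt | heq | hgt
    · exfalso
      have : Qp = S' ++ List.replicate (y - v) b := by
        apply List.append_cancel_right (bs := List.replicate v b)
        rw [h, List.append_assoc, ← List.replicate_add]
        congr 2; omega
      apply hQp
      rw [this, List.getLast?_append, getLast?_replicate_pos (by omega : 1 ≤ y - v)]; rfl
    · exact heq
    · exfalso
      have : S' = Qp ++ List.replicate (v - y) b := by
        apply List.append_cancel_right (bs := List.replicate y b)
        rw [← h, List.append_assoc, ← List.replicate_add]
        congr 2; omega
      apply hS'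
      rw [this, List.getLast?_append, getLast?_replicate_pos (by omega : 1 ≤ v - y)]; rfl
  subst hvy
  exact ⟨rfl, List.append_cancel_right h, rfl⟩

lemma getLast?_drop {l : List α} {i : ℕ} (h : i < l.length) :
    (l.drop i).getLast? = l.getLast? := by
  conv_rhs => rw [← List.take_append_drop i l]
  rw [List.getLast?_append]
  have : l.drop i ≠ [] := by
    intro hnil; have : (l.drop i).length = l.length - i := List.length_drop; rw [hnil] at this; simp at this; omega
  have hs : (l.drop i).getLast?.isSome := by rw [List.getLast?_isSome]; exact this
  obtain ⟨x, hx⟩ := Option.isSome_iff_exists.mp hs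
  rw [hx]; rfl

/-- `TruncDecomp P Pp a w` : `P = Pp ++ a^w` where `a^w` is the last run of `P`
(`w ≥ 1` and `Pp` does not end with `a`). `Pp` is the truncated string of `P`. -/
def TruncDecomp (P Pp : List α) (a : α) (w : ℕ) : Prop :=
  P = Pp ++ List.replicate w a ∧ 1 ≤ w ∧ Pp.getLast? ≠ some a

/-- `P` truncate matches `Q`: with `P = Pp ++ a^w` and `Q = Qp ++ a^v` (last runs),
`Pp` is a suffix of `Qp`, the run characters agree, and `w ≤ v`. -/
def TruncMatch (P Q : List α) : Prop :=
  ∃ Pp a w Qp v, TruncDecomp P Pp a w ∧ TruncDecomp Q Qp a v ∧ Pp <:+ Qp ∧ w ≤ v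

/-- A pattern P with at least two runs has an occurrence in T = S' · α^y ending strictly
inside the final run α^y iff P truncate matches T.  (Occurrences are 0-indexed:
an occurrence at i means T[i..i+|P|-1] = P; it ends in the last y positions
when i + |P| > |S'|.) -/
theorem occurrence_in_last_run_iff_truncMatch [DecidableEq α]
    (S' : List α) (a : α) (y : ℕ) (hy : 1 ≤ y) (hS' : S'.getLast? ≠ some a)
    (P : List α) (hP : 2 ≤ (rle P).length) :
    (∃ i, i + P.length ≤ (S' ++ List.replicate y a).length ∧
        ((S' ++ List.replicate y a).drop i).take P.length = P ∧
        S'.length < i + P.length) ↔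
      TruncMatch P (S' ++ List.replicate y a) := by
  constructor
  · rintro ⟨i, h1, h2, h3⟩
    simp only [List.length_append, List.length_replicate] at h1
    have hiS : i < S'.length := by
      by_contra hge
      push_neg at hge
      apply not_replicate_of_rle hP a P.length
      rw [← h2, List.drop_append, List.drop_eq_nil_of_le hge,
        List.nil_append, List.drop_replicate, List.take_replicate,
        min_eq_left (by omega : P.length ≤ y - (i - S'.length))]
      simp
    set k := S'.length - i with hk
    set w := i + P.length - S'.length with hw
    have hklen : (S'.drop i).length = k := by simp [hk]
    have hPlen : P.length = k + w := by omega
    have hdrop : (S' ++ List.replicate y a).drop i = S'.drop i ++ List.replicate y a := by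
      rw [List.drop_append, Nat.sub_eq_zero_of_le hiS.le, List.drop_zero]
    have hPform : P = S'.drop i ++ List.replicate w a := by
      rw [← h2, hdrop, hPlen, ← hklen, List.take_append, List.take_replicate,
        Nat.add_sub_cancel_left, min_eq_left (by omega : w ≤ y), List.take_of_length_le (Nat.le_add_right _ _)]
    refine ⟨S'.drop i, a, w, S', y, ⟨hPform, by omega, ?_⟩, ⟨rfl, hy, hS'⟩,
      List.drop_suffix i S', by omega⟩
    rw [getLast?_drop hiS]
    exact hS'
  · rintro ⟨Pp, b, w, Qp, v, ⟨hPeq, hw1, hPplast⟩, ⟨hQeq, hv1, hQplast⟩, hsuf, hwv⟩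
    obtain ⟨hba, hQpS, hvy⟩ := trunc_unique hQeq.symm hv1 hy hQplast hS'
    subst hba; subst hQpS; subst hvy
    obtain ⟨t, ht⟩ := hsuf
    have hlt := congrArg List.length ht
    simp only [List.length_append] at hlt
    have hlP := congrArg List.length hPeq
    simp only [List.length_append, List.length_replicate] at hlP
    refine ⟨t.length, ?_, ?_, ?_⟩
    · simp only [List.length_append, List.length_replicate]; omega
    · rw [← ht, List.append_assoc, List.drop_left, hlP, List.take_append,
        List.take_replicate, Nat.add_sub_cancel_left, min_eq_left hwv, List.take_of_length_le (Nat.le_add_right _ _)]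
      exact hPeq.symm
    · omega
end

section
/- Let S' be a string not ending with character α, y ≥ 1, and let 𝒫 be a set of patterns each with at least two runs. Let P_i' be the longest string among the truncated strings of patterns in 𝒫 that is a suffix of S' (assuming one exists, and that every pattern in 𝒫 whose truncated string is a suffix of S' has truncated string a suffix of P_i'). Then a pattern P ∈ 𝒫 truncate matches S'·α^y if and only if P truncate matches P_i'·α^y. -/
variable {α : Type*}

/-!
Both target strings end in the run `a^y` preceded by a character other than `a`, so a
pattern `P = P' · b^w` truncate matches `T · a^y` exactly when `b = a`, `w ≤ y` and `P'` is a
suffix of `T`. For `T = S'` and `T = Pi'` these conditions agree: a truncated string that is a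
suffix of `S'` is a suffix of `Pi'` by maximality, and conversely because `Pi'` is a suffix of `S'`.
-/

theorem List.IsSuffix.getLast?_eq_some {l s : List α} {x : α} (h : l <:+ s)
    (hl : l.getLast? = some x) : s.getLast? = some x := by
  obtain ⟨t, rfl⟩ := h
  simp [List.getLast?_append, hl]

namespace TruncDecomp

variable {P p q : List α} {a b : α} {w v : ℕ}

theorem append_replicate (hw : 1 ≤ w) (hp : p.getLast? ≠ some a) :
    TruncDecomp (p ++ List.replicate w a) p a w :=
  ⟨rfl, hw, hp⟩

theorem getLast?_eq (h : TruncDecomp P p a w) : P.getLast? = some a := by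
  obtain ⟨rfl, hw, -⟩ := h
  simp [List.getLast?_append, List.getLast?_replicate, Nat.one_le_iff_ne_zero.mp hw]

theorem unique (h₁ : TruncDecomp P p a w) (h₂ : TruncDecomp P q b v) :
    p = q ∧ a = b ∧ w = v := by
  have hab : a = b := Option.some_injective _ (h₁.getLast?_eq.symm.trans h₂.getLast?_eq)
  subst hab
  wlog hwv : w ≤ v generalizing p q w v
  · obtain ⟨hqp, -, hvw⟩ := this h₂ h₁ (le_of_not_ge hwv)
    exact ⟨hqp.symm, rfl, hvw.symm⟩
  obtain ⟨k, rfl⟩ := Nat.exists_eq_add_of_le' hwv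
  have hp : p = q ++ List.replicate k a := by
    apply List.append_cancel_right (bs := List.replicate w a)
    rw [← h₁.1, h₂.1, List.replicate_add, List.append_assoc]
  -- a positive `k` would make the truncated string `p` end with `a`
  obtain rfl : k = 0 := by
    by_contra hk
    exact h₁.2.2 (by simp [hp, List.getLast?_append, List.getLast?_replicate, hk])
  simpa using hp

end TruncDecomp

theorem truncMatch_append_replicate_iff {P s : List α} {a : α} {y : ℕ} (hy : 1 ≤ y)
    (hs : s.getLast? ≠ some a) :
    TruncMatch P (s ++ List.replicate y a) ↔ ∃ p w, TruncDecomp P p a w ∧ p <:+ s ∧ w ≤ y := by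
  have hd := TruncDecomp.append_replicate hy hs
  constructor
  · rintro ⟨p, b, w, q, v, hP, hQ, hpq, hwv⟩
    obtain ⟨rfl, rfl, rfl⟩ := hQ.unique hd
    exact ⟨p, w, hP, hpq, hwv⟩
  · rintro ⟨p, w, hP, hps, hwy⟩
    exact ⟨p, a, w, s, y, hP, hd, hps, hwy⟩

theorem truncMatch_via_longest_truncated_suffix_general
    (Pats : Set (List α))
    (S' : List α) (a : α) (y : ℕ) (hy : 1 ≤ y) (hS' : S'.getLast? ≠ some a)
    (Pi' : List α)
    (hPi'suf : Pi' <:+ S')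
    (hmax : ∀ P ∈ Pats, ∀ Q b w, TruncDecomp P Q b w → Q <:+ S' → Q <:+ Pi') :
    ∀ P ∈ Pats, (TruncMatch P (S' ++ List.replicate y a) ↔
      TruncMatch P (Pi' ++ List.replicate y a)) := by
  intro P hP
  have hPi' : Pi'.getLast? ≠ some a := fun h => hS' (hPi'suf.getLast?_eq_some h)
  rw [truncMatch_append_replicate_iff hy hS', truncMatch_append_replicate_iff hy hPi']
  constructor
  · rintro ⟨p, w, hd, hpS, hwy⟩
    exact ⟨p, w, hd, hmax P hP p a w hd hpS, hwy⟩
  · rintro ⟨p, w, hd, hpPi, hwy⟩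
    exact ⟨p, w, hd, hpPi.trans hPi'suf, hwy⟩

/-- Let Pi' be the longest suffix of S' among the truncated strings of the patterns in Pats
(each pattern having at least two runs).  Then a pattern P ∈ Pats truncate matches
S' · α^y iff P truncate matches Pi' · α^y. -/
theorem truncMatch_via_longest_truncated_suffix [DecidableEq α]
    (Pats : Set (List α)) (hruns : ∀ P ∈ Pats, 2 ≤ (rle P).length)
    (S' : List α) (a : α) (y : ℕ) (hy : 1 ≤ y) (hS' : S'.getLast? ≠ some a)
    (Pi' : List α)
    (hPi' : ∃ Pi ∈ Pats, ∃ b w, TruncDecomp Pi Pi' b w)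
    (hPi'suf : Pi' <:+ S')
    (hmax : ∀ P ∈ Pats, ∀ Q b w, TruncDecomp P Q b w → Q <:+ S' → Q <:+ Pi') :
    ∀ P ∈ Pats, (TruncMatch P (S' ++ List.replicate y a) ↔
      TruncMatch P (Pi' ++ List.replicate y a)) :=
  truncMatch_via_longest_truncated_suffix_general Pats S' a y hy hS' Pi' hPi'suf hmax
end

section
/- Correctness of the Aho–Corasick invariant step: let L be the set of prefixes of patterns in a finite set 𝒫, and suppose v ∈ L is the longest element of L that is a suffix of a string S'. For a character a, the longest element of L that is a suffix of S'·a is u·a, where u is the longest (not necessarily proper) suffix of v such that u ∈ L and u·a ∈ L, if such u exists; otherwise it is the empty string. -/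
variable {α : Type*}

/-- The set of all prefixes of patterns in Pats. -/
def prefixLang (Pats : Set (List α)) : Set (List α) := {u | ∃ P ∈ Pats, u <+: P}

/-- Key decomposition: a nonempty member of L that is a suffix of S'++[a] has the form
u ++ [a] with u ∈ L, u a suffix of v. -/
lemma aho_decomp (Pats : Set (List α)) (S' v : List α) (a : α)
    (hvs : v <:+ S')
    (hvmax : ∀ w ∈ prefixLang Pats, w <:+ S' → w.length ≤ v.length)
    (w : List α) (hwL : w ∈ prefixLang Pats) (hws : w <:+ (S' ++ [a])) (hne : w ≠ []) :
    ∃ u, w = u ++ [a] ∧ u <:+ v ∧ u ∈ prefixLang Pats ∧ u ++ [a] ∈ prefixLang Pats := by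
  obtain ⟨u, b, rfl⟩ : ∃ u b, w = u ++ [b] := by
    rcases w.eq_nil_or_concat with h | ⟨u, b, h⟩
    · exact absurd h hne
    · exact ⟨u, b, by simpa using h⟩
  obtain ⟨t, ht⟩ := hws
  have hba : b = a := by
    have := congrArg List.getLast? ht
    simpa using this
  cases hba
  have hus : u <:+ S' := by
    refine ⟨t, ?_⟩
    have h2 : (t ++ u) ++ [a] = S' ++ [a] := by simpa [List.append_assoc] using ht
    have := List.append_inj_left' h2 rfl
    simpa using this
  have huL : u ∈ prefixLang Pats := by
    obtain ⟨P, hP, hpre⟩ := hwL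
    exact ⟨P, hP, ((u.prefix_append [a]).trans hpre)⟩
  have huv : u <:+ v :=
    List.suffix_of_suffix_length_le hus hvs (hvmax u huL hus)
  exact ⟨u, rfl, huv, huL, hwL⟩

/-- Aho–Corasick step: if v is the longest prefix of a pattern that is a suffix of S',
then the longest prefix of a pattern that is a suffix of S'·a is u·a for u the longest
suffix of v with u and u·a prefixes of patterns, if such u exists; otherwise it is
the empty string. -/
theorem aho_corasick_step (Pats : Set (List α)) (hPats : Pats.Nonempty)
    (S' v : List α) (a : α)
    (hvL : v ∈ prefixLang Pats) (hvs : v <:+ S')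
    (hvmax : ∀ w ∈ prefixLang Pats, w <:+ S' → w.length ≤ v.length) :
    (∀ u, u <:+ v → u ∈ prefixLang Pats → u ++ [a] ∈ prefixLang Pats →
      (∀ u', u' <:+ v → u' ∈ prefixLang Pats → u' ++ [a] ∈ prefixLang Pats →
        u'.length ≤ u.length) →
      (u ++ [a]) ∈ prefixLang Pats ∧ (u ++ [a]) <:+ (S' ++ [a]) ∧
        ∀ w ∈ prefixLang Pats, w <:+ (S' ++ [a]) → w.length ≤ (u ++ [a]).length) ∧
    ((¬ ∃ u, u <:+ v ∧ u ∈ prefixLang Pats ∧ u ++ [a] ∈ prefixLang Pats) →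
      ∀ w ∈ prefixLang Pats, w <:+ (S' ++ [a]) → w = []) := by
  constructor
  · intro u huv huL huaL humax
    obtain ⟨t, ht⟩ := huv.trans hvs
    refine ⟨huaL, ⟨t, by rw [← ht]; simp⟩, ?_⟩
    intro w hwL hws
    rcases eq_or_ne w [] with rfl | hne
    · simp
    · obtain ⟨u', rfl, hu'v, hu'L, hu'aL⟩ :=
        aho_decomp Pats S' v a hvs hvmax w hwL hws hne
      have := humax u' hu'v hu'L hu'aL
      simpa using this
  · intro hno w hwL hws
    by_contra hne
    obtain ⟨u', _, hu'v, hu'L, hu'aL⟩ :=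
      aho_decomp Pats S' v a hvs hvmax w hwL hws hne
    exact hno ⟨u', hu'v, hu'L, hu'aL⟩
end

section
/- Any occurrence of a pattern P in text S ends inside exactly one run of S, and hence the occurrences of P in S are partitioned by the run of S containing their last position; moreover, if P has at least two runs, then for each run α^y of S there is at most one occurrence of P whose last position lies in that run. -/
variable {α : Type*}

lemma rle_sum [DecidableEq α] (S : List α) : ((rle S).map Prod.snd).sum = S.length := by
  induction S with
  | nil => rfl
  | cons a l ih =>
    rw [rle]
    cases h : rle l with
    | nil =>
      rw [h] at ih
      simp only [List.map_nil, List.sum_nil] at ih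
      simp only [List.map_cons, List.map_nil, List.sum_cons, List.sum_nil, List.length_cons]
      omega
    | cons hd t =>
      obtain ⟨b, n⟩ := hd
      rw [h] at ih
      by_cases hab : a = b <;> simp [hab] at ih ⊢ <;> omega

lemma rle_pos [DecidableEq α] (S : List α) : ∀ x ∈ rle S, 0 < x.2 := by
  induction S with
  | nil => simp [rle]
  | cons a l ih =>
    rw [rle]
    cases h : rle l with
    | nil => simp
    | cons hd t =>
      obtain ⟨b, n⟩ := hd
      rw [h] at ih
      by_cases hab : a = b
      · subst hab
        simp only [if_pos rfl]
        intro x hx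
        rcases List.mem_cons.1 hx with rfl | hx
        · simp
        · exact ih x (List.mem_cons_of_mem _ hx)
      · simp only [if_neg hab]
        intro x hx
        rcases List.mem_cons.1 hx with rfl | hx
        · simp
        · exact ih x hx

lemma rle_replicate_s18 [DecidableEq α] (a : α) (n : ℕ) (hn : 0 < n) :
    rle (List.replicate n a) = [(a, n)] := by
  induction n with
  | zero => omega
  | succ m ih =>
    rcases Nat.eq_zero_or_pos m with hm | hm
    · subst hm; simp [rle]
    · rw [List.replicate_succ, rle, ih hm]
      simp

lemma aux_unique (L : List ℕ) (hL : ∀ x ∈ L, 0 < x) : ∀ t < L.sum,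
    ∃! j, j < L.length ∧ (L.take j).sum ≤ t ∧ t < (L.take (j + 1)).sum := by
  induction L with
  | nil => intro t ht; simp at ht
  | cons x L ih =>
    intro t ht
    by_cases hx : t < x
    · refine ⟨0, ⟨by simp, by simp, by simp [List.take_succ_cons]; omega⟩, ?_⟩
      rintro j ⟨hj, h1, h2⟩
      by_contra hne
      obtain ⟨k, rfl⟩ : ∃ k, j = k + 1 := ⟨j - 1, by omega⟩
      simp [List.take_succ_cons] at h1
      omega
    · push_neg at hx
      simp only [List.sum_cons] at ht
      obtain ⟨j', ⟨hj1, hj2, hj3⟩, hj4⟩ :=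
        ih (fun y hy => hL y (by simp [hy])) (t - x) (by omega)
      refine ⟨j' + 1, ⟨by simpa using hj1,
        by simp [List.take_succ_cons]; omega, by simp [List.take_succ_cons]; omega⟩, ?_⟩
      rintro j ⟨hj, h1, h2⟩
      obtain ⟨k, rfl⟩ : ∃ k, j = k + 1 := by
        rcases j with _ | k
        · simp [List.take_succ_cons] at h2; omega
        · exact ⟨k, rfl⟩
      have := hj4 k ⟨by simpa using hj, by simp [List.take_succ_cons] at h1; omega,
        by simp [List.take_succ_cons] at h2; omega⟩
      omega

/-- Every position of S lies in exactly one run of S (so occurrences of a pattern are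
partitioned by the run containing their last position), and a pattern with at least two
runs has at most one occurrence ending inside any given run of S. -/
theorem occurrences_partitioned_by_runs [DecidableEq α] (S : List α) :
    (∀ t < S.length, ∃! j, j < (rle S).length ∧
        (((rle S).take j).map Prod.snd).sum ≤ t ∧
        t < (((rle S).take (j + 1)).map Prod.snd).sum) ∧
    (∀ (P Spre Ssuf : List α) (a : α) (y : ℕ), 2 ≤ (rle P).length → 1 ≤ y →
      S = Spre ++ List.replicate y a ++ Ssuf →
      Spre.getLast? ≠ some a → Ssuf.head? ≠ some a →
      ∀ p q,
        (p + P.length ≤ S.length ∧ (S.drop p).take P.length = P ∧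
          Spre.length < p + P.length ∧ p + P.length ≤ Spre.length + y) →
        (q + P.length ≤ S.length ∧ (S.drop q).take P.length = P ∧
          Spre.length < q + P.length ∧ q + P.length ≤ Spre.length + y) →
        p = q) := by
  constructor
  · intro t ht
    have h := aux_unique ((rle S).map Prod.snd) (by
        intro x hx
        obtain ⟨y, hy, rfl⟩ := List.mem_map.1 hx
        exact rle_pos S y hy) t (by rw [rle_sum]; exact ht)
    simpa [List.map_take] using h
  · intro P Spre Ssuf a y hP2 hy hS hpre hsuf p q hp hq
    -- P is nonempty
    have hPne : P ≠ [] := by rintro rfl; simp [rle] at hP2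
    have hPlen : 1 ≤ P.length := List.length_pos_iff.2 hPne
    -- characters of S inside the run are a
    have hrun : ∀ i, Spre.length ≤ i → i < Spre.length + y → S[i]? = some a := by
      intro i h1 h2
      rw [hS, List.append_assoc, List.getElem?_append_right h1,
        List.getElem?_append, if_pos (by simp; omega), List.getElem?_replicate,
        if_pos (by omega)]
    -- the character of S just before the run is not a
    have hlast : ∀ i, i + 1 = Spre.length → S[i]? ≠ some a := by
      intro i hi h
      rw [hS, List.append_assoc, List.getElem?_append, if_pos (by omega)] at h
      rw [show i = Spre.length - 1 by omega, ← List.getLast?_eq_getElem?] at h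
      exact hpre h
    -- occurrence characters
    have hocc : ∀ r, (S.drop r).take P.length = P →
        ∀ k, k < P.length → S[r + k]? = P[k]? := by
      intro r hr k hk
      conv_rhs => rw [← hr]
      rw [List.getElem?_take, if_pos hk, List.getElem?_drop]
    -- last char of P is a
    have hPlast : P[P.length - 1]? = some a := by
      rw [← hocc p hp.2.1 (P.length - 1) (by omega), hrun] <;> omega
    -- P is not constant
    have hnotconst : ∃ x ∈ P, x ≠ a := by
      by_contra h
      push_neg at h
      have : P = List.replicate P.length a := List.eq_replicate_iff.2 ⟨rfl, h⟩
      rw [this, rle_replicate_s18 a P.length (by omega)] at hP2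
      simp at hP2
    -- trailing run of a's in P
    have hsplit := List.takeWhile_append_dropWhile (p := fun x => decide (x = a)) (l := P.reverse)
    set R := P.reverse with hR
    set tw := R.takeWhile (fun x => decide (x = a)) with htw
    set dw := R.dropWhile (fun x => decide (x = a)) with hdw
    set w := tw.length with hw
    have hRlen : R.length = P.length := by simp [hR]
    have htake : R.take w = tw := by rw [← hsplit, hw, List.take_left]
    have hdrop : R.drop w = dw := by rw [← hsplit, hw, List.drop_left]
    have hdwne : dw ≠ [] := by
      rw [hdw, Ne, List.dropWhile_eq_nil_iff]
      push_neg
      obtain ⟨x, hx1, hx2⟩ := hnotconst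
      exact ⟨x, by simp [hR, hx1], by simpa using hx2⟩
    have hlensplit : w + dw.length = P.length := by
      have := congrArg List.length hsplit
      simp only [List.length_append] at this
      rw [← hw] at this
      omega
    have hwlt : w < P.length := by
      have : dw.length ≠ 0 := fun h0 => hdwne (List.length_eq_zero_iff.1 h0)
      omega
    -- elements of trailing run
    have hin : ∀ k, k < w → R[k]? = some a := by
      intro k hk
      rw [show R[k]? = tw[k]? from by rw [← htake, List.getElem?_take, if_pos hk]]
      rw [List.getElem?_eq_getElem (by omega : k < tw.length)]
      have hmem : tw[k] ∈ tw := List.getElem_mem _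
      have h3 := List.mem_takeWhile_imp (p := fun x => decide (x = a)) (l := R) (x := tw[k]) hmem
      simpa using h3
    have hout : R[w]? ≠ some a := by
      rw [← List.head?_drop, hdrop]
      intro hcontr
      have h2 := List.head_dropWhile_not (fun x => decide (x = a)) (l := R) (by rwa [hdw] at hdwne)
      rw [List.head?_eq_head hdwne] at hcontr
      simp only [Option.some.injEq] at hcontr
      simp only [decide_eq_false_iff_not] at h2
      exact h2 hcontr
    -- reverse index translation
    have hrev : ∀ j, j < P.length → P[j]? = R[P.length - 1 - j]? := by
      intro j hj
      rw [hR, List.getElem?_reverse (by omega)]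
      rw [show P.length - 1 - (P.length - 1 - j) = j from by omega]
    have hw1 : 1 ≤ w := by
      by_contra h
      have hw0 : w = 0 := by omega
      have hr := hrev (P.length - 1) (by omega)
      rw [show P.length - 1 - (P.length - 1) = 0 by omega] at hr
      apply hout
      rw [hw0, ← hr]
      exact hPlast
    -- key: the end position is pinned
    have key : ∀ r, r + P.length ≤ S.length → (S.drop r).take P.length = P →
        Spre.length < r + P.length → r + P.length ≤ Spre.length + y →
        r + P.length = Spre.length + w := by
      intro r hr1 hr2 hr3 hr4
      rcases lt_trichotomy (r + P.length - w) Spre.length with h | h | h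
      · -- boundary char of Spre would be inside trailing run: contradiction
        exfalso
        have hrle : r ≤ Spre.length - 1 := by omega
        have hj1 : Spre.length - 1 - r < P.length := by omega
        have hPj : P[Spre.length - 1 - r]? = some a := by
          rw [hrev _ hj1]
          exact hin _ (by omega)
        have h5 := hocc r hr2 _ hj1
        rw [hPj] at h5
        exact hlast (r + (Spre.length - 1 - r)) (by omega) h5
      · omega
      · -- char before trailing run would be inside the a-run: contradiction
        exfalso
        have hj1 : P.length - 1 - w < P.length := by omega
        have hPj : P[P.length - 1 - w]? ≠ some a := by
          rw [hrev _ hj1]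
          rw [show P.length - 1 - (P.length - 1 - w) = w by omega]
          exact hout
        apply hPj
        rw [← hocc r hr2 _ hj1]
        exact hrun (r + (P.length - 1 - w)) (by omega) (by omega)
    have kp := key p hp.1 hp.2.1 hp.2.2.1 hp.2.2.2
    have kq := key q hq.1 hq.2.1 hq.2.2.1 hq.2.2.2
    omega
end
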